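/- Let r > 0 and let u, v : ℝ → ℝ be twice differentiable with u(t) > 0 and (u̇(t), v̇(t)) ≠ (0,0) for all t, and suppose γ(t) = ψ(u(t), v(t)) is an extrinsic catenary of elliptic type, i.e., (u,v) satisfies the Euler–Lagrange equations of ∫ f(u,v)‖γ̇‖ dt with f(u,v) = sinh(u/r). Then the Clairaut-type quantity (1/2)·sinh(2u/r)·cos ϑ is constant in t, where cos ϑ = cosh(u/r) v̇ / ‖γ̇‖ is the cosine of the angle between γ̇ and the v-coordinate curves of ψ; equivalently, t ↦ sinh(u/r)cosh²(u/r) v̇ / √(u̇² + cosh²(u/r) v̇²) is a constant function. -/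

import Mathlib

/-! When the weight `f = sinh(u/r)` does not depend on `v`, the coordinate `v` is cyclic: the
second Euler–Lagrange equation states that the conjugate momentum `f v̇ cosh²(u/r) / ‖γ̇‖`
has zero derivative, so it is constant (it is differentiable since `‖γ̇‖ > 0` for a regular
curve). This momentum is the Clairaut quantity `½ sinh(2u/r) cos ϑ`. -/

noncomputable section
open Real

/-- Minkowski inner product of `E₁³`. -/
def mink3 (X Y : ℝ × ℝ × ℝ) : ℝ := -(X.1 * Y.1) + X.2.1 * Y.2.1 + X.2.2 * Y.2.2

/-- Speed `‖γ̇‖ = √(−ẋ² + ẏ² + ż²)` of a curve `(x,y,z)` in `E₁³`. -/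
def speed3 (x y z : ℝ → ℝ) (t : ℝ) : ℝ :=
  Real.sqrt (-(deriv x t) ^ 2 + (deriv y t) ^ 2 + (deriv z t) ^ 2)

/-- Geodesic curvature of the curve `(x,y,z)` in `H²(r)`. -/
def kappaH2 (r : ℝ) (x y z : ℝ → ℝ) (t : ℝ) : ℝ :=
  -(x t * (deriv (deriv y) t * deriv z t - deriv y t * deriv (deriv z) t)
      - y t * (deriv (deriv x) t * deriv z t - deriv x t * deriv (deriv z) t)
      + z t * (deriv (deriv x) t * deriv y t - deriv x t * deriv (deriv y) t))
    / (r * (speed3 x y z t) ^ 3)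

/-- First component of `γ(t) = ψ(u(t), v(t))` (semi-geodesic parametrization). -/
def gX (r : ℝ) (u v : ℝ → ℝ) (t : ℝ) : ℝ :=
  r * Real.cosh (u t / r) * Real.cosh (v t / r)

/-- Second component of `γ(t) = ψ(u(t), v(t))`. -/
def gY (r : ℝ) (u v : ℝ → ℝ) (t : ℝ) : ℝ :=
  r * Real.cosh (u t / r) * Real.sinh (v t / r)

/-- Third component of `γ(t) = ψ(u(t), v(t))`. -/
def gZ (r : ℝ) (u v : ℝ → ℝ) (t : ℝ) : ℝ :=
  r * Real.sinh (u t / r)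

/-- `‖γ̇‖` in semi-geodesic coordinates: `√(u̇² + cosh²(u/r) v̇²)`. -/
def speedSG (r : ℝ) (u v : ℝ → ℝ) (t : ℝ) : ℝ :=
  Real.sqrt ((deriv u t) ^ 2 + (Real.cosh (u t / r)) ^ 2 * (deriv v t) ^ 2)

/-- Geodesic curvature of `γ(t) = ψ(u(t), v(t))` in `H²(r)`. -/
def kappaSG (r : ℝ) (u v : ℝ → ℝ) (t : ℝ) : ℝ :=
  kappaH2 r (gX r u v) (gY r u v) (gZ r u v) t

/-- The Euler–Lagrange equations of the functional `∫ f(u,v) ‖γ̇‖ dt` in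
semi-geodesic coordinates. -/
def EulerLagrange (r : ℝ) (f : ℝ → ℝ → ℝ) (u v : ℝ → ℝ) : Prop :=
  ∀ t : ℝ,
    deriv (fun a => f a (v t)) (u t) * speedSG r u v t
        + f (u t) (v t) * Real.sinh (u t / r) * Real.cosh (u t / r) * (deriv v t) ^ 2
          / (r * speedSG r u v t)
      = deriv (fun s => f (u s) (v s) * deriv u s / speedSG r u v s) t
    ∧ deriv (fun b => f (u t) b) (v t) * speedSG r u v t
      = deriv (fun s =>
          f (u s) (v s) * deriv v s * (Real.cosh (u s / r)) ^ 2 / speedSG r u v s) t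

theorem speedSG_pos {r : ℝ} {u v : ℝ → ℝ} {t : ℝ} (hreg : (deriv u t, deriv v t) ≠ (0, 0)) :
    0 < speedSG r u v t := by
  refine Real.sqrt_pos.mpr ?_
  rcases eq_or_ne (deriv u t) 0 with hu0 | hu0
  · have hv0 : deriv v t ≠ 0 := fun hv0 => hreg (by rw [hu0, hv0])
    rw [hu0]
    have := Real.cosh_pos (u t / r)
    positivity
  · have := sq_pos_of_ne_zero hu0
    positivity

theorem differentiable_speedSG {r : ℝ} {u v : ℝ → ℝ} (hu : Differentiable ℝ u)
    (hu2 : Differentiable ℝ (deriv u)) (hv2 : Differentiable ℝ (deriv v))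
    (hreg : ∀ t, (deriv u t, deriv v t) ≠ (0, 0)) : Differentiable ℝ (speedSG r u v) := fun t =>
  (((hu2 t).pow 2).add ((((hu t).div_const r).cosh.pow 2).mul ((hv2 t).pow 2))).sqrt
    (Real.sqrt_pos.mp (speedSG_pos (r := r) (hreg t))).ne'

def vMomentum (r : ℝ) (g : ℝ → ℝ) (u v : ℝ → ℝ) (s : ℝ) : ℝ :=
  g (u s) * deriv v s * Real.cosh (u s / r) ^ 2 / speedSG r u v s

theorem differentiable_vMomentum {r : ℝ} {g : ℝ → ℝ} {u v : ℝ → ℝ} (hg : Differentiable ℝ g)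
    (hu : Differentiable ℝ u) (hu2 : Differentiable ℝ (deriv u))
    (hv2 : Differentiable ℝ (deriv v)) (hreg : ∀ t, (deriv u t, deriv v t) ≠ (0, 0)) :
    Differentiable ℝ (vMomentum r g u v) := fun t =>
  ((((hg.comp hu) t).mul (hv2 t)).mul (((hu t).div_const r).cosh.pow 2)).div
    (differentiable_speedSG hu hu2 hv2 hreg t) (speedSG_pos (hreg t)).ne'

theorem EulerLagrange.deriv_vMomentum_eq_zero {r : ℝ} {g : ℝ → ℝ} {u v : ℝ → ℝ}
    (hEL : EulerLagrange r (fun a _ => g a) u v) (t : ℝ) : deriv (vMomentum r g u v) t = 0 := by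
  have h := (hEL t).2
  rw [deriv_const, zero_mul] at h
  exact h.symm

theorem EulerLagrange.exists_vMomentum_eq_const {r : ℝ} {g : ℝ → ℝ} {u v : ℝ → ℝ}
    (hg : Differentiable ℝ g) (hu : Differentiable ℝ u) (hu2 : Differentiable ℝ (deriv u))
    (hv2 : Differentiable ℝ (deriv v)) (hreg : ∀ t, (deriv u t, deriv v t) ≠ (0, 0))
    (hEL : EulerLagrange r (fun a _ => g a) u v) : ∃ c, ∀ t, vMomentum r g u v t = c :=
  ⟨vMomentum r g u v 0, fun t =>
    is_const_of_deriv_eq_zero (differentiable_vMomentum hg hu hu2 hv2 hreg)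
      hEL.deriv_vMomentum_eq_zero t 0⟩

theorem clairaut_elliptic_catenary_general (r : ℝ) (u v : ℝ → ℝ)
    (hu : Differentiable ℝ u) (hu2 : Differentiable ℝ (deriv u))
    (hv2 : Differentiable ℝ (deriv v))
    (hreg : ∀ t : ℝ, (deriv u t, deriv v t) ≠ (0, 0))
    (hEL : EulerLagrange r (fun a _ => Real.sinh (a / r)) u v) :
    ∃ c : ℝ, ∀ t : ℝ,
      Real.sinh (u t / r) * (Real.cosh (u t / r)) ^ 2 * deriv v t / speedSG r u v t
        = c := by
  have hsinh : Differentiable ℝ fun a => Real.sinh (a / r) :=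
    (differentiable_id.div_const r).sinh
  obtain ⟨c, hc⟩ := hEL.exists_vMomentum_eq_const hsinh hu hu2 hv2 hreg
  refine ⟨c, fun t => ?_⟩
  rw [← hc t, vMomentum, mul_right_comm (Real.sinh _)]

/-- Clairaut-type conservation law for extrinsic catenaries of
elliptic type: `sinh(u/r) cosh²(u/r) v̇ / ‖γ̇‖` is constant. -/
theorem clairaut_elliptic_catenary (r : ℝ) (hr : 0 < r) (u v : ℝ → ℝ)
    (hupos : ∀ t : ℝ, 0 < u t)
    (hu : Differentiable ℝ u) (hu2 : Differentiable ℝ (deriv u))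
    (hv : Differentiable ℝ v) (hv2 : Differentiable ℝ (deriv v))
    (hreg : ∀ t : ℝ, (deriv u t, deriv v t) ≠ (0, 0))
    (hEL : EulerLagrange r (fun a _ => Real.sinh (a / r)) u v) :
    ∃ c : ℝ, ∀ t : ℝ,
      Real.sinh (u t / r) * (Real.cosh (u t / r)) ^ 2 * deriv v t / speedSG r u v t
        = c :=
  clairaut_elliptic_catenary_general r u v hu hu2 hv2 hreg hEL
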